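/- Let d ≥ 1, let γ be the standard Gaussian measure on ℝ^d, and let a, b ∈ ℝ^d. Then ∫ erf′(⟨a,z⟩) · erf′(⟨b,z⟩) dγ(z) = (4/π) · ( (1 + 2‖a‖₂²)(1 + 2‖b‖₂²) − 4⟨a,b⟩² )^{−1/2}, where erf′(x) = (2/√π) e^{−x²} is the derivative of the error function. Equivalently, with Σ = [[⟨a,a⟩, ⟨a,b⟩],[⟨a,b⟩, ⟨b,b⟩]], the integral equals (4/π) det(I₂ + 2Σ)^{−1/2}. -/

import Mathlib

open MeasureTheory Matrix

/-- The standard Gaussian measure on `ℝ^d`: the law of `d` i.i.d. standard normals. -/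
noncomputable def stdGaussian (d : ℕ) : Measure (Fin d → ℝ) :=
  Measure.pi fun _ : Fin d => ProbabilityTheory.gaussianReal 0 1

/-- The derivative of the error function: `erf′(x) = (2/√π) e^{−x²}`. -/
noncomputable def erfDeriv (x : ℝ) : ℝ :=
  (2 / Real.sqrt Real.pi) * Real.exp (-(x ^ 2))

/-! The identity `e^{-y²} = E[e^{i s y}]` for `s ~ N(0, 2)` linearizes both factors of the
integrand. The integrands are bounded, so the order of integration can be exchanged, and the
`z`-integral becomes the characteristic function of the standard Gaussian at `t b + s a`, namely
`e^{-‖t b + s a‖² / 2}`. What remains is the integral of a Gaussian quadratic form in `(s, t)`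
against `N(0, 2) ⊗ N(0, 2)`; completing the square one variable at a time gives
`det(I₂ + 2Σ)^{-1/2}`. -/

open Real Complex
open ProbabilityTheory (gaussianReal gaussianPDFReal charFun_gaussianReal gaussianReal_zero_var
  integral_gaussianReal_eq_integral_smul)
open scoped NNReal

theorem integral_exp_neg_mul_sq_add_mul {b : ℝ} (hb : 0 < b) (c : ℝ) :
    ∫ x, rexp (-b * x ^ 2 + c * x) = √(π / b) * rexp (c ^ 2 / (4 * b)) := by
  have hsq (x : ℝ) : -b * x ^ 2 + c * x = -b * (x - c / (2 * b)) ^ 2 + c ^ 2 / (4 * b) := by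
    field_simp; ring
  simp_rw [hsq, Real.exp_add, integral_mul_const,
    integral_sub_right_eq_self (fun x ↦ rexp (-b * x ^ 2)), integral_gaussian]

theorem integral_exp_neg_mul_sq_add_mul_gaussianReal {v : ℝ≥0} {β : ℝ} (h : 0 < 1 + β * v)
    (c : ℝ) :
    ∫ x, rexp (-(β * x ^ 2 / 2) + c * x) ∂gaussianReal 0 v =
      (√(1 + β * v))⁻¹ * rexp (v * c ^ 2 / (2 * (1 + β * v))) := by
  rcases eq_or_ne v 0 with rfl | hv
  · simp [gaussianReal_zero_var]
  have hb : 0 < (1 + β * v) / (2 * v) := by positivity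
  have hpt (x : ℝ) : gaussianPDFReal 0 v x • rexp (-(β * x ^ 2 / 2) + c * x) =
      (√(2 * π * v))⁻¹ * rexp (-((1 + β * v) / (2 * v)) * x ^ 2 + c * x) := by
    rw [gaussianPDFReal, smul_eq_mul, mul_assoc, ← Real.exp_add]
    congr 2
    field_simp
    ring
  simp_rw [integral_gaussianReal_eq_integral_smul hv, hpt, integral_const_mul,
    integral_exp_neg_mul_sq_add_mul hb]
  rw [← mul_assoc]
  congr 1
  · rw [show π / ((1 + β * v) / (2 * v)) = 2 * π * v / (1 + β * v) by field_simp,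
      Real.sqrt_div' _ h.le]
    field_simp
  · congr 1
    field_simp
    ring

theorem integral_integral_exp_neg_quadratic_gaussianReal {v : ℝ≥0} {α β γ : ℝ}
    (hβ : 0 < 1 + β * v) (hdet : 0 < (1 + α * v) * (1 + β * v) - γ ^ 2 * v ^ 2) :
    ∫ s, ∫ t, rexp (-((α * s ^ 2 + 2 * γ * s * t + β * t ^ 2) / 2)) ∂gaussianReal 0 v
        ∂gaussianReal 0 v =
      (√((1 + α * v) * (1 + β * v) - γ ^ 2 * v ^ 2))⁻¹ := by
  set α' := α - v * γ ^ 2 / (1 + β * v) with hα'_def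
  have hα' : (1 + α' * v) * (1 + β * v) = (1 + α * v) * (1 + β * v) - γ ^ 2 * v ^ 2 := by
    linear_combination (-v) * div_mul_cancel₀ (v * γ ^ 2) hβ.ne'
  have hinner (s : ℝ) :
      ∫ t, rexp (-((α * s ^ 2 + 2 * γ * s * t + β * t ^ 2) / 2)) ∂gaussianReal 0 v =
        (√(1 + β * v))⁻¹ * rexp (-(α' * s ^ 2 / 2) + 0 * s) := by
    have hsplit (t : ℝ) : rexp (-((α * s ^ 2 + 2 * γ * s * t + β * t ^ 2) / 2)) =
        rexp (-(β * t ^ 2 / 2) + (-γ * s) * t) * rexp (-(α * s ^ 2 / 2)) := by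
      rw [← Real.exp_add]; ring_nf
    simp_rw [hsplit, integral_mul_const, integral_exp_neg_mul_sq_add_mul_gaussianReal hβ,
      mul_assoc, ← Real.exp_add]
    congr 2
    rw [hα'_def]
    field_simp
    ring
  have hα'_pos : 0 < 1 + α' * v := pos_of_mul_pos_left (hα' ▸ hdet) hβ.le
  simp_rw [hinner, integral_const_mul, integral_exp_neg_mul_sq_add_mul_gaussianReal hα'_pos,
    ← hα', Real.sqrt_mul hα'_pos.le]
  simp [mul_comm]

theorem ofReal_exp_neg_sq_eq_integral_gaussianReal (y : ℝ) :
    (rexp (-y ^ 2) : ℂ) = ∫ s, cexp (y * s * I) ∂gaussianReal 0 2 := by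
  rw [← charFun_apply_real, charFun_gaussianReal]
  push_cast
  ring_nf

theorem integral_mul_exp_neg_sq_eq_integral_integral {X : Type*} [MeasurableSpace X]
    (μ : Measure X) [IsFiniteMeasure μ] {f : X → ℝ} {g : X → ℂ} (hf : Measurable f)
    (hg : Measurable g) {C : ℝ} (hgC : ∀ x, ‖g x‖ ≤ C) :
    ∫ x, g x * rexp (-f x ^ 2) ∂μ = ∫ s, ∫ x, g x * cexp (f x * s * I) ∂μ ∂gaussianReal 0 2 := by
  simp_rw [ofReal_exp_neg_sq_eq_integral_gaussianReal, ← integral_const_mul]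
  refine integral_integral_swap (.of_bound (by fun_prop) C (.of_forall fun ⟨x, s⟩ ↦ ?_))
  simpa only [Function.uncurry_apply_pair, norm_mul, ← ofReal_mul, norm_exp_ofReal_mul_I,
    mul_one] using hgC x

instance (d : ℕ) : IsProbabilityMeasure (stdGaussian d) := by
  unfold stdGaussian; infer_instance

theorem integral_cexp_sum_mul_mul_I_stdGaussian {d : ℕ} (w : Fin d → ℝ) :
    ∫ z, cexp ((∑ i, w i * z i : ℝ) * I) ∂stdGaussian d = rexp (-(∑ i, w i ^ 2) / 2) := by
  simp_rw [ofReal_sum, Finset.sum_mul, Complex.exp_sum, ofReal_mul]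
  rw [stdGaussian, integral_fintype_prod_eq_prod (f := fun i (x : ℝ) ↦ cexp (w i * x * I))]
  simp_rw [← charFun_apply_real, charFun_gaussianReal, ← Complex.exp_sum]
  push_cast
  simp [neg_div, Finset.sum_div]

theorem integral_exp_neg_sq_mul_exp_neg_sq_stdGaussian {d : ℕ} (a b : Fin d → ℝ) :
    ∫ z, rexp (-(∑ i, a i * z i) ^ 2) * rexp (-(∑ i, b i * z i) ^ 2) ∂stdGaussian d =
      (√((1 + 2 * ∑ i, a i ^ 2) * (1 + 2 * ∑ i, b i ^ 2) - 4 * (∑ i, a i * b i) ^ 2))⁻¹ := by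
  set A := ∑ i, a i ^ 2
  set B := ∑ i, b i ^ 2
  set C := ∑ i, a i * b i
  have hA : 0 ≤ A := by positivity
  have hB : 0 ≤ B := by positivity
  have hCS : C ^ 2 ≤ A * B := Finset.sum_mul_sq_le_sq_mul_sq _ _ _
  have hu : Measurable fun z : Fin d → ℝ ↦ ∑ i, a i * z i := by fun_prop
  have hv : Measurable fun z : Fin d → ℝ ↦ ∑ i, b i * z i := by fun_prop
  have hnorm (x : ℝ) : ‖(rexp (-x ^ 2) : ℂ)‖ ≤ 1 := by
    rw [norm_real, norm_of_nonneg (by positivity), Real.exp_le_one_iff]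
    nlinarith
  have hsum (s t : ℝ) : ∑ i, (t * b i + s * a i) ^ 2 = B * t ^ 2 + 2 * C * t * s + A * s ^ 2 := by
    simp only [A, B, C, Finset.mul_sum, Finset.sum_mul, ← Finset.sum_add_distrib]
    exact Finset.sum_congr rfl fun i _ ↦ by ring
  apply ofReal_injective
  rw [← integral_complex_ofReal]
  simp_rw [ofReal_mul]
  calc ∫ z, (rexp (-(∑ i, a i * z i) ^ 2) : ℂ) * (rexp (-(∑ i, b i * z i) ^ 2) : ℂ)
        ∂stdGaussian d
      = ∫ t, ∫ z, (rexp (-(∑ i, a i * z i) ^ 2) : ℂ) * cexp ((∑ i, b i * z i : ℝ) * t * I)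
          ∂stdGaussian d ∂gaussianReal 0 2 :=
        integral_mul_exp_neg_sq_eq_integral_integral _ hv (by fun_prop) fun z ↦ hnorm _
    _ = ∫ t, ∫ s, ∫ z, cexp ((∑ i, b i * z i : ℝ) * t * I) * cexp ((∑ i, a i * z i : ℝ) * s * I)
          ∂stdGaussian d ∂gaussianReal 0 2 ∂gaussianReal 0 2 := by
        congr! 2 with t
        simp_rw [mul_comm (rexp _ : ℂ)]
        exact integral_mul_exp_neg_sq_eq_integral_integral _ hu (by fun_prop)
          fun z ↦ by rw [← ofReal_mul, norm_exp_ofReal_mul_I]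
    _ = ∫ t, ∫ s, (rexp (-((B * t ^ 2 + 2 * C * t * s + A * s ^ 2) / 2)) : ℂ)
          ∂gaussianReal 0 2 ∂gaussianReal 0 2 := by
        congr! 4 with t s
        rw [← hsum, ← neg_div, ← integral_cexp_sum_mul_mul_I_stdGaussian]
        congr! 2 with z
        rw [← Complex.exp_add]
        push_cast
        simp only [Finset.sum_mul, ← Finset.sum_add_distrib]
        exact congrArg cexp (Finset.sum_congr rfl fun i _ ↦ by ring)
    _ = ((√((1 + 2 * A) * (1 + 2 * B) - 4 * C ^ 2))⁻¹ : ℝ) := by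
        simp_rw [integral_complex_ofReal]
        rw [integral_integral_exp_neg_quadratic_gaussianReal (by push_cast; positivity)
          (by push_cast; nlinarith)]
        push_cast
        ring_nf

theorem erfDeriv_mul_erfDeriv (x y : ℝ) :
    erfDeriv x * erfDeriv y = 4 / π * (rexp (-x ^ 2) * rexp (-y ^ 2)) := by
  simp only [erfDeriv]
  field_simp
  rw [Real.sq_sqrt pi_pos.le]
  ring

theorem erf_derivative_kernel_general (d : ℕ) (a b : Fin d → ℝ) :
    (∫ z, erfDeriv (∑ i, a i * z i) * erfDeriv (∑ i, b i * z i) ∂(stdGaussian d) =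
      (4 / Real.pi) *
        (Real.sqrt ((1 + 2 * ∑ i, a i ^ 2) * (1 + 2 * ∑ i, b i ^ 2) -
          4 * (∑ i, a i * b i) ^ 2))⁻¹) ∧
    (∫ z, erfDeriv (∑ i, a i * z i) * erfDeriv (∑ i, b i * z i) ∂(stdGaussian d) =
      (4 / Real.pi) *
        (Real.sqrt
          ((1 + (2 : ℝ) • (!![∑ i, a i * a i, ∑ i, a i * b i;
              ∑ i, a i * b i, ∑ i, b i * b i] : Matrix (Fin 2) (Fin 2) ℝ)).det))⁻¹) := by
  have hdet : (1 + (2 : ℝ) • (!![∑ i, a i * a i, ∑ i, a i * b i;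
      ∑ i, a i * b i, ∑ i, b i * b i] : Matrix (Fin 2) (Fin 2) ℝ)).det =
      (1 + 2 * ∑ i, a i ^ 2) * (1 + 2 * ∑ i, b i ^ 2) - 4 * (∑ i, a i * b i) ^ 2 := by
    simp [det_fin_two, one_apply, ← sq]
    ring
  simp_rw [erfDeriv_mul_erfDeriv, integral_const_mul,
    integral_exp_neg_sq_mul_exp_neg_sq_stdGaussian, hdet, and_self]

/-- The erf-derivative kernel: for `a, b ∈ ℝ^d`,
`∫ erf′(⟨a,z⟩) erf′(⟨b,z⟩) dγ(z) = (4/π)((1+2‖a‖²)(1+2‖b‖²) − 4⟨a,b⟩²)^{−1/2}`;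
equivalently, with `Σ = [[⟨a,a⟩,⟨a,b⟩],[⟨a,b⟩,⟨b,b⟩]]`, it equals
`(4/π) det(I₂ + 2Σ)^{−1/2}`. -/
theorem erf_derivative_kernel (d : ℕ) (hd : 1 ≤ d) (a b : Fin d → ℝ) :
    (∫ z, erfDeriv (∑ i, a i * z i) * erfDeriv (∑ i, b i * z i) ∂(stdGaussian d) =
      (4 / Real.pi) *
        (Real.sqrt ((1 + 2 * ∑ i, a i ^ 2) * (1 + 2 * ∑ i, b i ^ 2) -
          4 * (∑ i, a i * b i) ^ 2))⁻¹) ∧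
    (∫ z, erfDeriv (∑ i, a i * z i) * erfDeriv (∑ i, b i * z i) ∂(stdGaussian d) =
      (4 / Real.pi) *
        (Real.sqrt
          ((1 + (2 : ℝ) • (!![∑ i, a i * a i, ∑ i, a i * b i;
              ∑ i, a i * b i, ∑ i, b i * b i] : Matrix (Fin 2) (Fin 2) ℝ)).det))⁻¹) :=
  erf_derivative_kernel_general d a b
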